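/- arXiv:1705.06037 — 2 statements merged into one kernel-verified Lean document; each statement's English description precedes it below -/
import Mathlib

section
/- If H1 and H2 are simple finite hypergraphs, then their maximal-rank-preserving direct product H1×̂H2 is a simple hypergraph. -/
/-!
Basic definitions: finite hypergraphs (a finite nonempty vertex set `V`, given by
`[Fintype V] [Nonempty V]`, together with a set of nonempty edges), walks, distance,
connectedness, simplicity, rank, colorings, Helly property, covers,
the various hypergraph products, 2-sections, and graph products.
-/

/-- A hypergraph on a vertex type `V`: a collection of nonempty edges (finite subsets of `V`). -/
structure FinHypergraph (V : Type*) where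
  edges : Set (Finset V)
  nonempty_edges : ∀ e ∈ edges, e.Nonempty

namespace FinHypergraph

variable {V V₁ V₂ : Type*}

/-- There is a walk of length `n` from `u` to `v`: a sequence of vertices `w 0, …, w n`
and edges `f 1, …, f n` with consecutive vertices distinct and both contained
in the corresponding edge. -/
def HasWalk (H : FinHypergraph V) (u v : V) (n : ℕ) : Prop :=
  ∃ (w : Fin (n + 1) → V) (f : Fin n → Finset V),
    w 0 = u ∧ w (Fin.last n) = v ∧
      ∀ i : Fin n, f i ∈ H.edges ∧ w i.castSucc ≠ w i.succ ∧
        w i.castSucc ∈ f i ∧ w i.succ ∈ f i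

/-- The distance between two vertices: the minimum length of a walk joining them,
`⊤ = ∞` if there is none. -/
noncomputable def dist (H : FinHypergraph V) (u v : V) : ℕ∞ :=
  sInf {x : ℕ∞ | ∃ n : ℕ, x = n ∧ H.HasWalk u v n}

/-- A hypergraph is connected if any two vertices are joined by a walk. -/
def Connected (H : FinHypergraph V) : Prop := ∀ u v : V, ∃ n, H.HasWalk u v n

/-- A hypergraph is simple if every edge has at least two vertices and
no edge is contained in another edge. -/
def Simple (H : FinHypergraph V) : Prop :=
  (∀ e ∈ H.edges, 2 ≤ e.card) ∧ ∀ e ∈ H.edges, ∀ f ∈ H.edges, e ⊆ f → e = f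

/-- A hypergraph is loopless if every edge has at least two vertices. -/
def Loopless (H : FinHypergraph V) : Prop := ∀ e ∈ H.edges, 2 ≤ e.card

/-- The rank: the maximum cardinality of an edge. -/
noncomputable def rank (H : FinHypergraph V) : ℕ := sSup (Finset.card '' H.edges)

/-- The anti-rank: the minimum cardinality of an edge. -/
noncomputable def antirank (H : FinHypergraph V) : ℕ := sInf (Finset.card '' H.edges)

/-- A proper coloring: no color class contains an edge. -/
def IsProperColoring (H : FinHypergraph V) {k : ℕ} (c : V → Fin k) : Prop :=
  ∀ e ∈ H.edges, ∀ i : Fin k, ¬ ∀ v ∈ e, c v = i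

/-- A proper strong coloring: a proper coloring in which the vertices of every
edge receive pairwise distinct colors. -/
def IsStrongColoring (H : FinHypergraph V) {k : ℕ} (c : V → Fin k) : Prop :=
  H.IsProperColoring c ∧ ∀ e ∈ H.edges, ∀ u ∈ e, ∀ v ∈ e, u ≠ v → c u ≠ c v

/-- The chromatic number: the least `k` admitting a proper `k`-coloring. -/
noncomputable def chromaticNumber (H : FinHypergraph V) : ℕ :=
  sInf {k : ℕ | ∃ c : V → Fin k, H.IsProperColoring c}

/-- The strong chromatic number: the least `k` admitting a proper strong `k`-coloring. -/
noncomputable def strongChromaticNumber (H : FinHypergraph V) : ℕ :=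
  sInf {k : ℕ | ∃ c : V → Fin k, H.IsStrongColoring c}

/-- The Helly property: every intersecting family of edges is a star. -/
def Helly (H : FinHypergraph V) : Prop :=
  ∀ E' ⊆ H.edges, (∀ e ∈ E', ∀ f ∈ E', ∃ x, x ∈ e ∧ x ∈ f) → ∃ v, ∀ e ∈ E', v ∈ e

/-- The covering number: the minimum cardinality of a set of vertices meeting every edge. -/
noncomputable def coverNumber (H : FinHypergraph V) : ℕ :=
  sInf {k : ℕ | ∃ T : Finset V, T.card = k ∧ ∀ e ∈ H.edges, ∃ v ∈ T, v ∈ e}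

/-- The Cartesian product of hypergraphs. -/
def cartProd (H₁ : FinHypergraph V₁) (H₂ : FinHypergraph V₂) : FinHypergraph (V₁ × V₂) where
  edges := {E | (∃ x, ∃ f ∈ H₂.edges, E = {x} ×ˢ f) ∨ ∃ e ∈ H₁.edges, ∃ y, E = e ×ˢ {y}}
  nonempty_edges := by
    rintro E (⟨x, f, hf, rfl⟩ | ⟨e, he, y, rfl⟩)
    · exact (Finset.singleton_nonempty x).product (H₂.nonempty_edges f hf)
    · exact (H₁.nonempty_edges e he).product (Finset.singleton_nonempty y)

section Products

variable [DecidableEq V₁] [DecidableEq V₂]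

/-- The minimal-rank-preserving direct product `H₁ ×̌ H₂`. -/
def minDirProd (H₁ : FinHypergraph V₁) (H₂ : FinHypergraph V₂) : FinHypergraph (V₁ × V₂) where
  edges := {E | ∃ e₁ ∈ H₁.edges, ∃ e₂ ∈ H₂.edges,
    E ⊆ e₁ ×ˢ e₂ ∧ E.card = min e₁.card e₂.card ∧
      (E.image Prod.fst).card = min e₁.card e₂.card ∧
      (E.image Prod.snd).card = min e₁.card e₂.card}
  nonempty_edges := by
    rintro E ⟨e₁, h₁, e₂, h₂, -, hc, -, -⟩
    rw [← Finset.card_pos, hc]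
    exact lt_min (Finset.card_pos.mpr (H₁.nonempty_edges e₁ h₁))
      (Finset.card_pos.mpr (H₂.nonempty_edges e₂ h₂))

/-- The maximal-rank-preserving direct product `H₁ ×̂ H₂`. -/
def maxDirProd (H₁ : FinHypergraph V₁) (H₂ : FinHypergraph V₂) : FinHypergraph (V₁ × V₂) where
  edges := {E | ∃ e₁ ∈ H₁.edges, ∃ e₂ ∈ H₂.edges,
    E ⊆ e₁ ×ˢ e₂ ∧ E.card = max e₁.card e₂.card ∧
      E.image Prod.fst = e₁ ∧ E.image Prod.snd = e₂}
  nonempty_edges := by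
    rintro E ⟨e₁, h₁, e₂, h₂, -, hc, -, -⟩
    rw [← Finset.card_pos, hc]
    exact lt_max_iff.mpr (Or.inl (Finset.card_pos.mpr (H₁.nonempty_edges e₁ h₁)))

/-- The non-rank-preserving direct product `H₁ ×̃ H₂`. -/
def nrDirProd (H₁ : FinHypergraph V₁) (H₂ : FinHypergraph V₂) : FinHypergraph (V₁ × V₂) where
  edges := {E | ∃ e ∈ H₁.edges, ∃ f ∈ H₂.edges, ∃ x ∈ e, ∃ y ∈ f,
    E = insert (x, y) ((e.erase x) ×ˢ (f.erase y))}
  nonempty_edges := by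
    rintro E ⟨e, -, f, -, x, -, y, -, rfl⟩
    exact Finset.insert_nonempty _ _

/-- The normal product `H₁ ⊠̌ H₂`: union of the Cartesian product edges and the
minimal-rank-preserving direct product edges. -/
def normalProd (H₁ : FinHypergraph V₁) (H₂ : FinHypergraph V₂) : FinHypergraph (V₁ × V₂) where
  edges := (H₁.cartProd H₂).edges ∪ (H₁.minDirProd H₂).edges
  nonempty_edges := by
    rintro E (h | h)
    · exact (H₁.cartProd H₂).nonempty_edges E h
    · exact (H₁.minDirProd H₂).nonempty_edges E h

/-- The strong product `H₁ ⊠̂ H₂`: union of the Cartesian product edges and the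
maximal-rank-preserving direct product edges. -/
def strongProd (H₁ : FinHypergraph V₁) (H₂ : FinHypergraph V₂) : FinHypergraph (V₁ × V₂) where
  edges := (H₁.cartProd H₂).edges ∪ (H₁.maxDirProd H₂).edges
  nonempty_edges := by
    rintro E (h | h)
    · exact (H₁.cartProd H₂).nonempty_edges E h
    · exact (H₁.maxDirProd H₂).nonempty_edges E h

/-- The lexicographic product `H₁ ∘ H₂`. -/
def lexProd (H₁ : FinHypergraph V₁) (H₂ : FinHypergraph V₂) : FinHypergraph (V₁ × V₂) where
  edges := {E | (E.image Prod.fst ∈ H₁.edges ∧ (E.image Prod.fst).card = E.card) ∨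
    ∃ x, ∃ e₂ ∈ H₂.edges, E = {x} ×ˢ e₂}
  nonempty_edges := by
    rintro E (⟨h₁, hc⟩ | ⟨x, e₂, h₂, rfl⟩)
    · rw [← Finset.card_pos, ← hc]
      exact Finset.card_pos.mpr (H₁.nonempty_edges _ h₁)
    · exact (Finset.singleton_nonempty x).product (H₂.nonempty_edges e₂ h₂)

end Products

/-- The square product `H₁ ■ H₂`. -/
def squareProd (H₁ : FinHypergraph V₁) (H₂ : FinHypergraph V₂) : FinHypergraph (V₁ × V₂) where
  edges := {E | ∃ e₁ ∈ H₁.edges, ∃ e₂ ∈ H₂.edges, E = e₁ ×ˢ e₂}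
  nonempty_edges := by
    rintro E ⟨e₁, h₁, e₂, h₂, rfl⟩
    exact (H₁.nonempty_edges e₁ h₁).product (H₂.nonempty_edges e₂ h₂)

/-- The 2-section of a hypergraph: distinct vertices are adjacent iff they lie
in a common edge. -/
def twoSection (H : FinHypergraph V) : SimpleGraph V where
  Adj x y := x ≠ y ∧ ∃ e ∈ H.edges, x ∈ e ∧ y ∈ e
  symm := by constructor; rintro x y ⟨hxy, e, he, hx, hy⟩; exact ⟨hxy.symm, e, he, hy, hx⟩
  loopless := by constructor; rintro x ⟨hx, -⟩; exact hx rfl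

end FinHypergraph

namespace SimpleGraph

variable {V₁ V₂ : Type*}

/-- The direct (tensor) product of simple graphs. -/
def directProd (G₁ : SimpleGraph V₁) (G₂ : SimpleGraph V₂) : SimpleGraph (V₁ × V₂) where
  Adj x y := G₁.Adj x.1 y.1 ∧ G₂.Adj x.2 y.2
  symm := ⟨fun _ _ ⟨h₁, h₂⟩ => ⟨h₁.symm, h₂.symm⟩⟩
  loopless := ⟨fun x h => G₁.irrefl h.1⟩

/-- The strong product of simple graphs. -/
def strongGraphProd (G₁ : SimpleGraph V₁) (G₂ : SimpleGraph V₂) : SimpleGraph (V₁ × V₂) where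
  Adj x y := x ≠ y ∧ ((x.1 = y.1 ∧ G₂.Adj x.2 y.2) ∨ (x.2 = y.2 ∧ G₁.Adj x.1 y.1) ∨
    (G₁.Adj x.1 y.1 ∧ G₂.Adj x.2 y.2))
  symm := by
    constructor
    rintro x y ⟨hne, (⟨h, h'⟩ | ⟨h, h'⟩ | ⟨h, h'⟩)⟩
    · exact ⟨hne.symm, Or.inl ⟨h.symm, h'.symm⟩⟩
    · exact ⟨hne.symm, Or.inr (Or.inl ⟨h.symm, h'.symm⟩)⟩
    · exact ⟨hne.symm, Or.inr (Or.inr ⟨h.symm, h'.symm⟩)⟩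
  loopless := by constructor; rintro x ⟨hx, -⟩; exact hx rfl

/-- The lexicographic product of simple graphs. -/
def lexGraphProd (G₁ : SimpleGraph V₁) (G₂ : SimpleGraph V₂) : SimpleGraph (V₁ × V₂) where
  Adj x y := G₁.Adj x.1 y.1 ∨ (x.1 = y.1 ∧ G₂.Adj x.2 y.2)
  symm := by
    constructor
    rintro x y (h | ⟨h, h'⟩)
    · exact Or.inl h.symm
    · exact Or.inr ⟨h.symm, h'.symm⟩
  loopless := by
    constructor
    rintro x (h | ⟨-, h⟩)
    · exact G₁.irrefl h
    · exact G₂.irrefl h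

end SimpleGraph

namespace FinHypergraph

variable {V₁ V₂ : Type*} [DecidableEq V₁] [DecidableEq V₂]
  {H₁ : FinHypergraph V₁} {H₂ : FinHypergraph V₂} {E F : Finset (V₁ × V₂)}

theorem image_fst_mem_of_mem_maxDirProd (hE : E ∈ (H₁.maxDirProd H₂).edges) :
    E.image Prod.fst ∈ H₁.edges := by
  obtain ⟨e₁, he₁, -, -, -, -, rfl, -⟩ := hE
  exact he₁

theorem image_snd_mem_of_mem_maxDirProd (hE : E ∈ (H₁.maxDirProd H₂).edges) :
    E.image Prod.snd ∈ H₂.edges := by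
  obtain ⟨-, -, e₂, he₂, -, -, -, rfl⟩ := hE
  exact he₂

theorem card_eq_max_of_mem_maxDirProd (hE : E ∈ (H₁.maxDirProd H₂).edges) :
    E.card = max (E.image Prod.fst).card (E.image Prod.snd).card := by
  obtain ⟨-, -, -, -, -, hcard, rfl, rfl⟩ := hE
  exact hcard

theorem Loopless.maxDirProd (h : H₁.Loopless) : (H₁.maxDirProd H₂).Loopless := fun _ hE =>
  (card_eq_max_of_mem_maxDirProd hE).symm ▸
    le_max_of_le_left (h _ (image_fst_mem_of_mem_maxDirProd hE))

theorem eq_of_subset_of_mem_maxDirProd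
    (h₁ : ∀ e ∈ H₁.edges, ∀ f ∈ H₁.edges, e ⊆ f → e = f)
    (h₂ : ∀ e ∈ H₂.edges, ∀ f ∈ H₂.edges, e ⊆ f → e = f)
    (hE : E ∈ (H₁.maxDirProd H₂).edges) (hF : F ∈ (H₁.maxDirProd H₂).edges) (hEF : E ⊆ F) :
    E = F := by
  have hfst : E.image Prod.fst = F.image Prod.fst :=
    h₁ _ (image_fst_mem_of_mem_maxDirProd hE) _ (image_fst_mem_of_mem_maxDirProd hF)
      (Finset.image_subset_image hEF)
  have hsnd : E.image Prod.snd = F.image Prod.snd :=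
    h₂ _ (image_snd_mem_of_mem_maxDirProd hE) _ (image_snd_mem_of_mem_maxDirProd hF)
      (Finset.image_subset_image hEF)
  refine Finset.eq_of_subset_of_card_le hEF ?_
  rw [card_eq_max_of_mem_maxDirProd hE, card_eq_max_of_mem_maxDirProd hF, hfst, hsnd]

end FinHypergraph

theorem simple_maxDirProd_general {V₁ V₂ : Type*} [DecidableEq V₁] [DecidableEq V₂]
    (H₁ : FinHypergraph V₁) (H₂ : FinHypergraph V₂)
    (h₁ : H₁.Simple) (h₂ : H₂.Simple) :
    (H₁.maxDirProd H₂).Simple :=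
  ⟨FinHypergraph.Loopless.maxDirProd h₁.1, fun _ hE _ hF hEF =>
    FinHypergraph.eq_of_subset_of_mem_maxDirProd h₁.2 h₂.2 hE hF hEF⟩

/-- the maximal-rank-preserving direct product of simple hypergraphs is simple. -/
theorem simple_maxDirProd {V₁ V₂ : Type*} [Fintype V₁] [Nonempty V₁] [DecidableEq V₁]
    [Fintype V₂] [Nonempty V₂] [DecidableEq V₂] (H₁ : FinHypergraph V₁) (H₂ : FinHypergraph V₂)
    (h₁ : H₁.Simple) (h₂ : H₂.Simple) :
    (H₁.maxDirProd H₂).Simple :=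
  simple_maxDirProd_general H₁ H₂ h₁ h₂
end

section
/- Let H and H' be finite hypergraphs each having at least one edge. Then the covering number of their square product satisfies τ(H■H') ≥ τ(H) + τ(H') − 1. -/
/-!
Let `T` be a minimum cover of `H₁ ■ H₂` and choose an edge `e₀` of `H₁` over which `T` has the
fewest points. The second coordinates of the points of `T` over `e₀` cover `H₂`, since `T` meets
every `e₀ × f`. On the other side, pick a point `t ∈ T` over `e₀`: if adding `t.1` to the first
coordinates of the points of `T` outside `e₀` did not cover `H₁`, a missed edge would carry
fewer points of `T` than `e₀`. Hence `τ(H₂) + (τ(H₁) - 1) ≤ |T|`.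
-/

namespace FinHypergraph

variable {V V₁ V₂ α : Type*}

def IsCover (H : FinHypergraph V) (T : Finset V) : Prop := ∀ e ∈ H.edges, ∃ v ∈ T, v ∈ e

theorem coverNumber_le_card {H : FinHypergraph V} {T : Finset V} (hT : H.IsCover T) :
    H.coverNumber ≤ T.card :=
  Nat.sInf_le ⟨T, rfl, hT⟩

theorem exists_isCover_card_eq_coverNumber [Finite V] (H : FinHypergraph V) :
    ∃ T : Finset V, H.IsCover T ∧ T.card = H.coverNumber := by
  have := Fintype.ofFinite V
  have hne : {k | ∃ T : Finset V, T.card = k ∧ H.IsCover T}.Nonempty :=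
    ⟨_, Finset.univ, rfl, fun e he ↦
      (H.nonempty_edges e he).imp fun v hv ↦ ⟨Finset.mem_univ v, hv⟩⟩
  obtain ⟨T, hcard, hT⟩ := Nat.sInf_mem hne
  exact ⟨T, hT, hcard⟩

theorem IsCover.image_snd_filter_fst_mem [DecidableEq V₁] [DecidableEq V₂]
    {H₁ : FinHypergraph V₁} {H₂ : FinHypergraph V₂} {T : Finset (V₁ × V₂)}
    (hT : (H₁.squareProd H₂).IsCover T) {e : Finset V₁} (he : e ∈ H₁.edges) :
    H₂.IsCover ((T.filter (·.1 ∈ e)).image Prod.snd) := by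
  intro f hf
  obtain ⟨p, hpT, hp⟩ := hT (e ×ˢ f) ⟨e, he, f, hf, rfl⟩
  rw [Finset.mem_product] at hp
  exact ⟨p.2, Finset.mem_image_of_mem _ (Finset.mem_filter.mpr ⟨hpT, hp.1⟩), hp.2⟩

section Projection

variable [DecidableEq V] {H : FinHypergraph V} {T : Finset α} {π : α → V}

theorem isCover_insert_image_filter_notMem {e₀ : Finset V}
    (hmin : IsMinOn (fun e ↦ (T.filter (π · ∈ e)).card) H.edges e₀) {t : α} (ht : t ∈ T)
    (hte₀ : π t ∈ e₀) : H.IsCover (insert (π t) ((T.filter (π · ∉ e₀)).image π)) := by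
  by_contra hnot
  obtain ⟨e, he, hmiss⟩ : ∃ e ∈ H.edges, ∀ v ∈ insert (π t) ((T.filter (π · ∉ e₀)).image π),
      v ∉ e := by
    unfold IsCover at hnot
    push Not at hnot
    exact hnot
  have hsub : T.filter (π · ∈ e) ⊆ T.filter (π · ∈ e₀) := by
    intro s hs
    rw [Finset.mem_filter] at hs ⊢
    refine ⟨hs.1, by_contra fun h ↦ hmiss (π s) ?_ hs.2⟩
    exact Finset.mem_insert_of_mem (Finset.mem_image_of_mem _ (Finset.mem_filter.mpr ⟨hs.1, h⟩))
  have hlt : (T.filter (π · ∈ e)).card < (T.filter (π · ∈ e₀)).card := by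
    refine Finset.card_lt_card ((Finset.ssubset_iff_of_subset hsub).mpr ⟨t, ?_, ?_⟩)
    · exact Finset.mem_filter.mpr ⟨ht, hte₀⟩
    · exact fun h ↦ hmiss (π t) (Finset.mem_insert_self _ _) (Finset.mem_filter.mp h).2
  exact (hmin he).not_gt hlt

theorem exists_edge_coverNumber_le_card_filter_notMem_add_one (hH : H.edges.Nonempty)
    (hT : ∀ e ∈ H.edges, ∃ t ∈ T, π t ∈ e) :
    ∃ e₀ ∈ H.edges, H.coverNumber ≤ (T.filter (π · ∉ e₀)).card + 1 := by
  let count : Finset V → ℕ := fun e ↦ (T.filter (π · ∈ e)).card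
  set e₀ := Function.argminOn count H.edges hH
  have he₀ : e₀ ∈ H.edges := Function.argminOn_mem count H.edges hH
  have hmin : IsMinOn count H.edges e₀ := fun e he ↦ Function.argminOn_le count H.edges he
  obtain ⟨t, ht, hte₀⟩ := hT e₀ he₀
  refine ⟨e₀, he₀, ?_⟩
  calc H.coverNumber
      ≤ (insert (π t) ((T.filter (π · ∉ e₀)).image π)).card :=
        coverNumber_le_card (isCover_insert_image_filter_notMem hmin ht hte₀)
    _ ≤ ((T.filter (π · ∉ e₀)).image π).card + 1 := Finset.card_insert_le _ _
    _ ≤ (T.filter (π · ∉ e₀)).card + 1 := by gcongr; exact Finset.card_image_le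

end Projection

end FinHypergraph

theorem coverNumber_squareProd_ge_general {V₁ V₂ : Type*} [Fintype V₁]
    [Fintype V₂] (H₁ : FinHypergraph V₁) (H₂ : FinHypergraph V₂)
    (h₁ : H₁.edges.Nonempty) (h₂ : H₂.edges.Nonempty) :
    (H₁.coverNumber : ℤ) + (H₂.coverNumber : ℤ) - 1 ≤
      ((H₁.squareProd H₂).coverNumber : ℤ) := by
  classical
  obtain ⟨T, hT, hcard⟩ := (H₁.squareProd H₂).exists_isCover_card_eq_coverNumber
  obtain ⟨f, hf⟩ := h₂
  have hfst : ∀ e ∈ H₁.edges, ∃ p ∈ T, p.1 ∈ e := fun e he ↦ by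
    obtain ⟨p, hpT, hp⟩ := hT (e ×ˢ f) ⟨e, he, f, hf, rfl⟩
    exact ⟨p, hpT, (Finset.mem_product.mp hp).1⟩
  obtain ⟨e₀, he₀, hτ₁⟩ :=
    FinHypergraph.exists_edge_coverNumber_le_card_filter_notMem_add_one h₁ hfst
  have hτ₂ : H₂.coverNumber ≤ (T.filter (·.1 ∈ e₀)).card :=
    (FinHypergraph.coverNumber_le_card (hT.image_snd_filter_fst_mem he₀)).trans
      Finset.card_image_le
  have hsplit := Finset.card_filter_add_card_filter_not (s := T) (·.1 ∈ e₀)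
  omega

/-- the covering number of the square product satisfies
`τ(H ■ H') ≥ τ(H) + τ(H') - 1` when both factors have at least one edge. -/
theorem coverNumber_squareProd_ge {V₁ V₂ : Type*} [Fintype V₁] [Nonempty V₁]
    [Fintype V₂] [Nonempty V₂] (H₁ : FinHypergraph V₁) (H₂ : FinHypergraph V₂)
    (h₁ : H₁.edges.Nonempty) (h₂ : H₂.edges.Nonempty) :
    (H₁.coverNumber : ℤ) + (H₂.coverNumber : ℤ) - 1 ≤
      ((H₁.squareProd H₂).coverNumber : ℤ) :=
  coverNumber_squareProd_ge_general H₁ H₂ h₁ h₂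
end
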